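/- Let F be an algebraically closed field of characteristic zero and let L_1, L_2 be finite-dimensional semisimple Lie algebras over F. Then every local derivation Δ on the direct sum L = L_1 ⊕ L_2 decomposes as Δ = Δ_1 ⊕ Δ_2, i.e. Δ(x_1, x_2) = (Δ_1(x_1), Δ_2(x_2)) for all x_1 ∈ L_1, x_2 ∈ L_2, where Δ_i is a local derivation on L_i for i = 1, 2. -/

import Mathlib

section ProdLie

variable (F : Type*) [Field F]
variable (L₁ L₂ : Type*) [LieRing L₁] [LieRing L₂]

/-- The componentwise Lie bracket on the direct sum `L₁ ⊕ L₂`. -/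
instance Prod.instLieRing : LieRing (L₁ × L₂) where
  bracket x y := (⁅x.1, y.1⁆, ⁅x.2, y.2⁆)
  add_lie x y z := by
    show (⁅(x + y).1, z.1⁆, ⁅(x + y).2, z.2⁆)
        = (⁅x.1, z.1⁆, ⁅x.2, z.2⁆) + (⁅y.1, z.1⁆, ⁅y.2, z.2⁆)
    simp [add_lie]
  lie_add x y z := by
    show (⁅x.1, (y + z).1⁆, ⁅x.2, (y + z).2⁆)
        = (⁅x.1, y.1⁆, ⁅x.2, y.2⁆) + (⁅x.1, z.1⁆, ⁅x.2, z.2⁆)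
    simp [lie_add]
  lie_self x := by
    show (⁅x.1, x.1⁆, ⁅x.2, x.2⁆) = (0 : L₁ × L₂)
    simp
  leibniz_lie x y z := by
    show (⁅x.1, ⁅y.1, z.1⁆⁆, ⁅x.2, ⁅y.2, z.2⁆⁆)
        = (⁅⁅x.1, y.1⁆, z.1⁆, ⁅⁅x.2, y.2⁆, z.2⁆) + (⁅y.1, ⁅x.1, z.1⁆⁆, ⁅y.2, ⁅x.2, z.2⁆⁆)
    exact Prod.ext (leibniz_lie x.1 y.1 z.1) (leibniz_lie x.2 y.2 z.2)

variable [LieAlgebra F L₁] [LieAlgebra F L₂]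

/-- The direct sum of two Lie algebras is a Lie algebra with componentwise operations. -/
instance Prod.instLieAlgebra : LieAlgebra F (L₁ × L₂) where
  lie_smul t x y := by
    show (⁅x.1, (t • y).1⁆, ⁅x.2, (t • y).2⁆) = t • (⁅x.1, y.1⁆, ⁅x.2, y.2⁆)
    simp [lie_smul]

end ProdLie

/-!
If `D` is a derivation of `L₁ × L₂`, then applying `D` to `⁅(x, 0), (0, z)⁆ = 0` gives
`⁅(D (x, 0)).2, z⁆ = 0` for every `z ∈ L₂`. A semisimple Lie algebra is centerless (its adjoint
representation is faithful), so `D` maps `L₁` into `L₁`, and likewise `L₂` into `L₂`. Evaluated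
pointwise, this makes a local derivation the product of its two diagonal blocks, and each block is a
local derivation because the diagonal blocks of a derivation are derivations.
-/

section LocalDerivation

variable {R L₁ L₂ : Type*} [CommRing R]
  [LieRing L₁] [LieAlgebra R L₁] [LieRing L₂] [LieAlgebra R L₂]

namespace LieDerivation

variable (D : LieDerivation R (L₁ × L₂) (L₁ × L₂))

def restrictFst : LieDerivation R L₁ L₁ where
  toLinearMap := LinearMap.fst R L₁ L₂ ∘ₗ (D : (L₁ × L₂) →ₗ[R] (L₁ × L₂)) ∘ₗ LinearMap.inl R L₁ L₂
  leibniz' a b := by simpa using congrArg Prod.fst (D.apply_lie_eq_sub (a, 0) (b, 0))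

def restrictSnd : LieDerivation R L₂ L₂ where
  toLinearMap := LinearMap.snd R L₁ L₂ ∘ₗ (D : (L₁ × L₂) →ₗ[R] (L₁ × L₂)) ∘ₗ LinearMap.inr R L₁ L₂
  leibniz' a b := by simpa using congrArg Prod.snd (D.apply_lie_eq_sub (0, a) (0, b))

@[simp]
lemma restrictFst_apply (x : L₁) : D.restrictFst x = (D (x, 0)).1 := rfl

@[simp]
lemma restrictSnd_apply (y : L₂) : D.restrictSnd y = (D (0, y)).2 := rfl

lemma snd_apply_inl_eq_zero [LieModule.IsFaithful R L₂ L₂] (x : L₁) : (D (x, 0)).2 = 0 := by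
  refine LieModule.IsFaithful.injective_toEnd (R := R) (M := L₂) ?_
  ext z
  simpa [← Prod.zero_eq_mk] using (congrArg Prod.snd (D.apply_lie_eq_add (x, 0) (0, z))).symm

lemma fst_apply_inr_eq_zero [LieModule.IsFaithful R L₁ L₁] (y : L₂) : (D (0, y)).1 = 0 := by
  refine LieModule.IsFaithful.injective_toEnd (R := R) (M := L₁) ?_
  ext z
  simpa [← Prod.zero_eq_mk] using (congrArg Prod.fst (D.apply_lie_eq_add (0, y) (z, 0))).symm

end LieDerivation

variable (R) in
def IsLocalDerivation {L : Type*} [LieRing L] [LieAlgebra R L] (Δ : L →ₗ[R] L) : Prop :=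
  ∀ x, ∃ D : LieDerivation R L L, Δ x = D x

namespace IsLocalDerivation

variable {Δ : (L₁ × L₂) →ₗ[R] (L₁ × L₂)}

lemma fst_comp_inl (hΔ : IsLocalDerivation R Δ) :
    IsLocalDerivation R (LinearMap.fst R L₁ L₂ ∘ₗ Δ ∘ₗ LinearMap.inl R L₁ L₂) :=
  fun x ↦ by
    obtain ⟨D, hD⟩ := hΔ (x, 0)
    exact ⟨D.restrictFst, by simp [hD]⟩

lemma snd_comp_inr (hΔ : IsLocalDerivation R Δ) :
    IsLocalDerivation R (LinearMap.snd R L₁ L₂ ∘ₗ Δ ∘ₗ LinearMap.inr R L₁ L₂) :=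
  fun y ↦ by
    obtain ⟨D, hD⟩ := hΔ (0, y)
    exact ⟨D.restrictSnd, by simp [hD]⟩

lemma eq_prodMap [LieModule.IsFaithful R L₁ L₁] [LieModule.IsFaithful R L₂ L₂]
    (hΔ : IsLocalDerivation R Δ) :
    Δ = (LinearMap.fst R L₁ L₂ ∘ₗ Δ ∘ₗ LinearMap.inl R L₁ L₂).prodMap
      (LinearMap.snd R L₁ L₂ ∘ₗ Δ ∘ₗ LinearMap.inr R L₁ L₂) := by
  refine LinearMap.prod_ext (LinearMap.ext fun x ↦ ?_) (LinearMap.ext fun y ↦ ?_)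
  · obtain ⟨D, hD⟩ := hΔ (x, 0)
    ext
    · rfl
    · simp [hD, D.snd_apply_inl_eq_zero, ← Prod.zero_eq_mk]
  · obtain ⟨D, hD⟩ := hΔ (0, y)
    ext
    · simp [hD, D.fst_apply_inr_eq_zero, ← Prod.zero_eq_mk]
    · rfl

end IsLocalDerivation

end LocalDerivation

theorem local_derivation_on_direct_sum_decomposes
    (F : Type*) [Field F]
    (L₁ L₂ : Type*) [LieRing L₁] [LieAlgebra F L₁] [LieRing L₂] [LieAlgebra F L₂]
    [LieAlgebra.HasTrivialRadical F L₁] [LieAlgebra.HasTrivialRadical F L₂]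
    (Δ : (L₁ × L₂) →ₗ[F] (L₁ × L₂))
    (hloc : ∀ x, ∃ D : LieDerivation F (L₁ × L₂) (L₁ × L₂), Δ x = D x) :
    ∃ (Δ₁ : L₁ →ₗ[F] L₁) (Δ₂ : L₂ →ₗ[F] L₂),
      (∀ x₁, ∃ D : LieDerivation F L₁ L₁, Δ₁ x₁ = D x₁) ∧
      (∀ x₂, ∃ D : LieDerivation F L₂ L₂, Δ₂ x₂ = D x₂) ∧
      (∀ x : L₁ × L₂, Δ x = (Δ₁ x.1, Δ₂ x.2)) := by
  have hΔ : IsLocalDerivation F Δ := hloc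
  exact ⟨_, _, hΔ.fst_comp_inl, hΔ.snd_comp_inr, LinearMap.congr_fun hΔ.eq_prodMap⟩
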